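/- arXiv:2106.14066 — 2 statements merged into one kernel-verified Lean document; each statement's English description precedes it below -/
import Mathlib

section
/- A rigid strongly separable algebra has a unique symmetric separability idempotent, given by 𝟙 → DA ⊗ A → A ⊗ A using the coevaluation η followed by (t*)⁻¹ ⊗ 1, where t* : A → DA is the isomorphism induced by the trace form. -/
open CategoryTheory MonoidalCategory

universe v u

namespace Paper

variable {C : Type u} [Category.{v} C] [MonoidalCategory C] [SymmetricCategory C]

/-- (κ1): μ ∘ κ = u. -/
def kappa1 (M : Mon C) (κ : 𝟙_ C ⟶ M.X ⊗ M.X) : Prop :=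
  κ ≫ MonObj.mul (X := M.X) = MonObj.one (X := M.X)

/-- (κ2): (1 ⊗ μ) ∘ (κ ⊗ 1) = (μ ⊗ 1) ∘ (1 ⊗ κ), as morphisms A ⟶ A ⊗ A. -/
def kappa2 (M : Mon C) (κ : 𝟙_ C ⟶ M.X ⊗ M.X) : Prop :=
  (λ_ M.X).inv ≫ (κ ▷ M.X) ≫ (α_ M.X M.X M.X).hom ≫ (M.X ◁ MonObj.mul (X := M.X))
    = (ρ_ M.X).inv ≫ (M.X ◁ κ) ≫ (α_ M.X M.X M.X).inv ≫ (MonObj.mul (X := M.X) ▷ M.X)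

/-- (κ3): κ = τ ∘ κ. -/
def kappa3 (M : Mon C) (κ : 𝟙_ C ⟶ M.X ⊗ M.X) : Prop :=
  κ = κ ≫ (β_ M.X M.X).hom

/-- (κ4): μ ∘ τ ∘ κ = u. -/
def kappa4 (M : Mon C) (κ : 𝟙_ C ⟶ M.X ⊗ M.X) : Prop :=
  κ ≫ (β_ M.X M.X).hom ≫ MonObj.mul (X := M.X) = MonObj.one (X := M.X)

/-- A symmetric separability idempotent. -/
def IsSymSepIdem (M : Mon C) (κ : 𝟙_ C ⟶ M.X ⊗ M.X) : Prop :=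
  kappa1 M κ ∧ kappa2 M κ ∧ kappa3 M κ

/-- Strongly separable: admits a symmetric separability idempotent. -/
def StronglySeparable (M : Mon C) : Prop :=
  ∃ κ : 𝟙_ C ⟶ M.X ⊗ M.X, IsSymSepIdem M κ

/-- Separable: the multiplication admits an (A,A)-bilinear section σ. -/
def Separable (M : Mon C) : Prop :=
  ∃ σ : M.X ⟶ M.X ⊗ M.X,
    σ ≫ MonObj.mul (X := M.X) = 𝟙 M.X ∧
    (σ ▷ M.X) ≫ (α_ M.X M.X M.X).hom ≫ (M.X ◁ MonObj.mul (X := M.X)) = MonObj.mul (X := M.X) ≫ σ ∧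
    MonObj.mul (X := M.X) ≫ σ = (M.X ◁ σ) ≫ (α_ M.X M.X M.X).inv ≫ (MonObj.mul (X := M.X) ▷ M.X)

/-- The algebra is commutative: μ ∘ τ = μ. -/
def Commutative (M : Mon C) : Prop :=
  (β_ M.X M.X).hom ≫ MonObj.mul (X := M.X) = MonObj.mul (X := M.X)

/-- Duality data exhibiting `DA` as a dual of `A`, with evaluation `ε : A ⊗ DA ⟶ 𝟙`
and coevaluation `η : 𝟙 ⟶ DA ⊗ A`, satisfying the triangle identities. -/
structure DualityData (A : C) where
  DA : C
  η : 𝟙_ C ⟶ DA ⊗ A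
  ε : A ⊗ DA ⟶ 𝟙_ C
  triangle₁ :
    (ρ_ A).inv ≫ (A ◁ η) ≫ (α_ A DA A).inv ≫ (ε ▷ A) ≫ (λ_ A).hom = 𝟙 A
  triangle₂ :
    (λ_ DA).inv ≫ (η ▷ DA) ≫ (α_ DA A DA).hom ≫ (DA ◁ ε) ≫ (ρ_ DA).hom = 𝟙 DA

/-- The trace map tr : A ⟶ 𝟙 of a rigid algebra:
A ≅ A ⊗ 𝟙 → A ⊗ (DA ⊗ A) → A ⊗ (A ⊗ DA) → (A ⊗ A) ⊗ DA → A ⊗ DA → 𝟙. -/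
def tr (M : Mon C) (D : DualityData M.X) : M.X ⟶ 𝟙_ C :=
  (ρ_ M.X).inv ≫ (M.X ◁ D.η) ≫ (M.X ◁ (β_ D.DA M.X).hom) ≫
    (α_ M.X M.X D.DA).inv ≫ (MonObj.mul (X := M.X) ▷ D.DA) ≫ D.ε

/-- The trace form t = tr ∘ μ : A ⊗ A ⟶ 𝟙. -/
def traceForm (M : Mon C) (D : DualityData M.X) : M.X ⊗ M.X ⟶ 𝟙_ C :=
  MonObj.mul (X := M.X) ≫ tr M D

/-- The adjoint t* : A ⟶ DA of the trace form. -/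
def tStar (M : Mon C) (D : DualityData M.X) : M.X ⟶ D.DA :=
  (λ_ M.X).inv ≫ (D.η ▷ M.X) ≫ (α_ D.DA M.X M.X).hom ≫
    (D.DA ◁ traceForm M D) ≫ (ρ_ D.DA).hom

/-- Invariant (associative) form: f ∘ (μ ⊗ 1) = f ∘ (1 ⊗ μ). -/
def Invariant (M : Mon C) (f : M.X ⊗ M.X ⟶ 𝟙_ C) : Prop :=
  (MonObj.mul (X := M.X) ▷ M.X) ≫ f = (α_ M.X M.X M.X).hom ≫ (M.X ◁ MonObj.mul (X := M.X)) ≫ f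

/-- The map A ⟶ A ⊗ A corresponding to a separability idempotent κ
(the common value in (κ2)). -/
def sepComul (M : Mon C) (κ : 𝟙_ C ⟶ M.X ⊗ M.X) : M.X ⟶ M.X ⊗ M.X :=
  (λ_ M.X).inv ≫ (κ ▷ M.X) ≫ (α_ M.X M.X M.X).hom ≫ (M.X ◁ MonObj.mul (X := M.X))

/-- A Frobenius structure on the algebra `M`: a compatible coalgebra structure
satisfying the Frobenius law. -/
structure FrobeniusStructure (M : Mon C) where
  Δ : M.X ⟶ M.X ⊗ M.X
  c : M.X ⟶ 𝟙_ C
  coassoc : Δ ≫ (Δ ▷ M.X) ≫ (α_ M.X M.X M.X).hom = Δ ≫ (M.X ◁ Δ)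
  counit_left : Δ ≫ (c ▷ M.X) ≫ (λ_ M.X).hom = 𝟙 M.X
  counit_right : Δ ≫ (M.X ◁ c) ≫ (ρ_ M.X).hom = 𝟙 M.X
  frob_left :
    (Δ ▷ M.X) ≫ (α_ M.X M.X M.X).hom ≫ (M.X ◁ MonObj.mul (X := M.X)) = MonObj.mul (X := M.X) ≫ Δ
  frob_right :
    MonObj.mul (X := M.X) ≫ Δ = (M.X ◁ Δ) ≫ (α_ M.X M.X M.X).inv ≫ (MonObj.mul (X := M.X) ▷ M.X)

/-- Special: μ ∘ Δ = id. -/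
def FrobeniusStructure.Special {M : Mon C} (F : FrobeniusStructure M) : Prop :=
  F.Δ ≫ MonObj.mul (X := M.X) = 𝟙 M.X

/-- Symmetric: the form c ∘ μ is symmetric. -/
def FrobeniusStructure.Symm {M : Mon C} (F : FrobeniusStructure M) : Prop :=
  (β_ M.X M.X).hom ≫ MonObj.mul (X := M.X) ≫ F.c = MonObj.mul (X := M.X) ≫ F.c

section Work

theorem slide {X Y : C} (f : 𝟙_ C ⟶ X) (g : 𝟙_ C ⟶ Y) :
    f ≫ (ρ_ X).inv ≫ (X ◁ g) = g ≫ (λ_ Y).inv ≫ (f ▷ Y) := by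
  rw [rightUnitor_inv_naturality_assoc, leftUnitor_inv_naturality_assoc, unitors_inv_equal,
    ← whisker_exchange]

variable (M : Mon C) (D : DualityData M.X)

/-- The candidate inverse `(t*)⁻¹ : DA ⟶ A` built from a separability idempotent. -/
def tinv (κ : 𝟙_ C ⟶ M.X ⊗ M.X) : D.DA ⟶ M.X :=
  (λ_ D.DA).inv ≫ (κ ▷ D.DA) ≫ (α_ M.X M.X D.DA).hom ≫ (M.X ◁ D.ε) ≫ (ρ_ M.X).hom

/-- `tr` without the final evaluation. -/
def trPre : M.X ⟶ M.X ⊗ D.DA :=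
  (ρ_ M.X).inv ≫ (M.X ◁ D.η) ≫ (M.X ◁ (β_ D.DA M.X).hom) ≫
    (α_ M.X M.X D.DA).inv ≫ (MonObj.mul (X := M.X) ▷ D.DA)

theorem tr_eq : tr M D = trPre M D ≫ D.ε := by
  simp [tr, trPre]

/-- L1 : `η ≫ ((tinv κ) ▷ A) = κ` for every `κ`. -/
theorem eta_tinv (κ : 𝟙_ C ⟶ M.X ⊗ M.X) : D.η ≫ (tinv M D κ ▷ M.X) = κ := by
  rw [tinv]
  simp only [comp_whiskerRight, Category.assoc]
  rw [show ((λ_ D.DA).inv ▷ M.X) = (λ_ (D.DA ⊗ M.X)).inv ≫ (α_ (𝟙_ C) D.DA M.X).inv by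
    monoidal]
  slice_lhs 3 4 => rw [← associator_inv_naturality_left]
  slice_lhs 1 3 => rw [← slide]
  have tail : (ρ_ (M.X ⊗ M.X)).inv ≫ ((M.X ⊗ M.X) ◁ D.η) ≫
      (α_ (M.X ⊗ M.X) D.DA M.X).inv ≫ ((α_ M.X M.X D.DA).hom ▷ M.X) ≫
      ((M.X ◁ D.ε) ▷ M.X) ≫ ((ρ_ M.X).hom ▷ M.X)
      = M.X ◁ ((ρ_ M.X).inv ≫ (M.X ◁ D.η) ≫ (α_ M.X D.DA M.X).inv ≫ (D.ε ▷ M.X) ≫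
          (λ_ M.X).hom) := by
    monoidal
  slice_lhs 2 7 => rw [tail]
  rw [D.triangle₁]
  simp

/-- T : refactoring `μ ≫ trPre`. -/
theorem mul_trPre :
    MonObj.mul (X := M.X) ≫ trPre M D
      = (M.X ◁ trPre M D) ≫ (α_ M.X M.X D.DA).inv ≫ (MonObj.mul (X := M.X) ▷ D.DA) := by
  rw [trPre]
  slice_lhs 1 2 => rw [rightUnitor_inv_naturality]
  slice_lhs 2 3 => rw [← whisker_exchange]
  slice_lhs 3 4 => rw [← whisker_exchange]
  slice_lhs 4 5 => rw [associator_inv_naturality_left]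
  slice_lhs 5 6 => rw [← comp_whiskerRight, MonObj.mul_assoc M.X]
  simp only [comp_whiskerRight, Category.assoc, trPre]
  monoidal

/-- snake₁. -/
theorem snake1 (κ : 𝟙_ C ⟶ M.X ⊗ M.X) (h1 : kappa1 M κ) (h2 : kappa2 M κ)
    (h3 : kappa3 M κ) :
    (λ_ M.X).inv ≫ (κ ▷ M.X) ≫ (α_ M.X M.X M.X).hom ≫ (M.X ◁ traceForm M D) ≫
      (ρ_ M.X).hom = 𝟙 M.X := by
  have hT : traceForm M D
      = (M.X ◁ trPre M D) ≫ (α_ M.X M.X D.DA).inv ≫ (MonObj.mul (X := M.X) ▷ D.DA) ≫ D.ε := by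
    rw [traceForm, tr_eq, ← Category.assoc, mul_trPre]; simp only [Category.assoc]
  have hb : (λ_ (M.X ⊗ D.DA)).inv ≫ (κ ▷ (M.X ⊗ D.DA)) ≫
      (α_ M.X M.X (M.X ⊗ D.DA)).hom ≫ (M.X ◁ (α_ M.X M.X D.DA).inv) ≫
      (M.X ◁ (MonObj.mul (X := M.X) ▷ D.DA)) ≫ (M.X ◁ D.ε) ≫ (ρ_ M.X).hom
      = (((λ_ M.X).inv ≫ (κ ▷ M.X) ≫ (α_ M.X M.X M.X).hom ≫ (M.X ◁ MonObj.mul (X := M.X))) ▷ D.DA) ≫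
        (α_ M.X M.X D.DA).hom ≫ (M.X ◁ D.ε) ≫ (ρ_ M.X).hom := by
    simp only [comp_whiskerRight, Category.assoc]; monoidal
  have hc : (((ρ_ M.X).inv ≫ (M.X ◁ κ) ≫ (α_ M.X M.X M.X).inv ≫ (MonObj.mul (X := M.X) ▷ M.X)) ▷ D.DA) ≫
      (α_ M.X M.X D.DA).hom ≫ (M.X ◁ D.ε) ≫ (ρ_ M.X).hom
      = (M.X ◁ tinv M D κ) ≫ MonObj.mul (X := M.X) := by
    simp only [comp_whiskerRight, Category.assoc]
    slice_lhs 4 5 => rw [associator_naturality_left]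
    slice_lhs 5 6 => rw [← whisker_exchange]
    slice_lhs 6 7 => rw [rightUnitor_naturality]
    rw [tinv]; simp only [MonoidalCategory.whiskerLeft_comp, Category.assoc]; monoidal
  calc (λ_ M.X).inv ≫ (κ ▷ M.X) ≫ (α_ M.X M.X M.X).hom ≫ (M.X ◁ traceForm M D) ≫
      (ρ_ M.X).hom
      = trPre M D ≫ (λ_ (M.X ⊗ D.DA)).inv ≫ (κ ▷ (M.X ⊗ D.DA)) ≫
        (α_ M.X M.X (M.X ⊗ D.DA)).hom ≫ (M.X ◁ (α_ M.X M.X D.DA).inv) ≫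
        (M.X ◁ (MonObj.mul (X := M.X) ▷ D.DA)) ≫ (M.X ◁ D.ε) ≫ (ρ_ M.X).hom := by
        rw [hT]
        simp only [MonoidalCategory.whiskerLeft_comp, Category.assoc]
        slice_lhs 3 4 => rw [← associator_naturality_right]
        slice_lhs 2 3 => rw [← whisker_exchange]
        slice_lhs 1 2 => rw [← leftUnitor_inv_naturality]
        simp only [Category.assoc]
    _ = trPre M D ≫ (((λ_ M.X).inv ≫ (κ ▷ M.X) ≫ (α_ M.X M.X M.X).hom ≫
          (M.X ◁ MonObj.mul (X := M.X))) ▷ D.DA) ≫ (α_ M.X M.X D.DA).hom ≫ (M.X ◁ D.ε) ≫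
          (ρ_ M.X).hom := by rw [← hb]
    _ = trPre M D ≫ (((ρ_ M.X).inv ≫ (M.X ◁ κ) ≫ (α_ M.X M.X M.X).inv ≫
          (MonObj.mul (X := M.X) ▷ M.X)) ▷ D.DA) ≫ (α_ M.X M.X D.DA).hom ≫ (M.X ◁ D.ε) ≫
          (ρ_ M.X).hom := by rw [h2]
    _ = trPre M D ≫ (M.X ◁ tinv M D κ) ≫ MonObj.mul (X := M.X) := by rw [hc]
    _ = (ρ_ M.X).inv ≫ (M.X ◁ (D.η ≫ (β_ D.DA M.X).hom ≫ (M.X ◁ tinv M D κ) ≫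
          MonObj.mul (X := M.X))) ≫ MonObj.mul (X := M.X) := by
        rw [trPre]
        simp only [MonoidalCategory.whiskerLeft_comp, Category.assoc]
        slice_lhs 5 6 => rw [← whisker_exchange]
        slice_lhs 4 5 => rw [← associator_inv_naturality_right]
        simp only [Category.assoc]
        rw [MonObj.mul_assoc M.X]
        simp only [Iso.inv_hom_id_assoc, MonoidalCategory.whiskerLeft_comp,
          Category.assoc]
    _ = (ρ_ M.X).inv ≫ (M.X ◁ MonObj.one (X := M.X)) ≫ MonObj.mul (X := M.X) := by
        have inner : D.η ≫ (β_ D.DA M.X).hom ≫ (M.X ◁ tinv M D κ) ≫ MonObj.mul (X := M.X) = MonObj.one (X := M.X) := by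
          have braid : (β_ D.DA M.X).hom ≫ (M.X ◁ tinv M D κ)
              = (tinv M D κ ▷ M.X) ≫ (β_ M.X M.X).hom :=
            (BraidedCategory.braiding_naturality_left (tinv M D κ) M.X).symm
          slice_lhs 2 3 => rw [braid]
          slice_lhs 1 2 => rw [eta_tinv]
          slice_lhs 1 2 => rw [← h3]
          rw [h1]
        rw [inner]
    _ = 𝟙 M.X := by rw [MonObj.mul_one M.X]; simp

theorem whiskerLeft_tStar_eval : (M.X ◁ tStar M D) ≫ D.ε = traceForm M D := by
  calc (M.X ◁ tStar M D) ≫ D.ε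
      = M.X ◁ (λ_ M.X).inv ≫ M.X ◁ (D.η ▷ M.X) ≫ M.X ◁ (α_ D.DA M.X M.X).hom ≫
        (α_ M.X D.DA (M.X ⊗ M.X)).inv ≫ ((M.X ⊗ D.DA) ◁ traceForm M D) ≫
        (ρ_ (M.X ⊗ D.DA)).hom ≫ D.ε := by rw [tStar]; monoidal
    _ = M.X ◁ (λ_ M.X).inv ≫ M.X ◁ (D.η ▷ M.X) ≫ M.X ◁ (α_ D.DA M.X M.X).hom ≫
        (α_ M.X D.DA (M.X ⊗ M.X)).inv ≫ (D.ε ▷ (M.X ⊗ M.X)) ≫ (λ_ (M.X ⊗ M.X)).hom ≫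
        traceForm M D := by
        slice_lhs 6 7 => rw [← rightUnitor_naturality]
        slice_lhs 5 6 => rw [whisker_exchange]
        simp only [Category.assoc, ← unitors_equal]
        rw [leftUnitor_naturality]
    _ = (((ρ_ M.X).inv ≫ (M.X ◁ D.η) ≫ (α_ M.X D.DA M.X).inv ≫ (D.ε ▷ M.X) ≫
          (λ_ M.X).hom) ▷ M.X) ≫ traceForm M D := by
        simp only [comp_whiskerRight, Category.assoc]; monoidal
    _ = traceForm M D := by rw [D.triangle₁]; simp

theorem tStar_tinv (κ : 𝟙_ C ⟶ M.X ⊗ M.X) (h1 : kappa1 M κ) (h2 : kappa2 M κ)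
    (h3 : kappa3 M κ) : tStar M D ≫ tinv M D κ = 𝟙 M.X := by
  rw [tinv]
  slice_lhs 1 2 => rw [leftUnitor_inv_naturality]
  slice_lhs 2 3 => rw [whisker_exchange]
  slice_lhs 3 4 => rw [associator_naturality_right]
  slice_lhs 4 5 => rw [← MonoidalCategory.whiskerLeft_comp, whiskerLeft_tStar_eval]
  try simp only [Category.assoc]
  exact snake1 M D κ h1 h2 h3

theorem kappa_tr_right (κ : 𝟙_ C ⟶ M.X ⊗ M.X) (h1 : kappa1 M κ) (h2 : kappa2 M κ)
    (h3 : kappa3 M κ) : κ ≫ (M.X ◁ tr M D) ≫ (ρ_ M.X).hom = MonObj.one (X := M.X) := by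
  have key : MonObj.one (X := M.X) ≫ ((λ_ M.X).inv ≫ (κ ▷ M.X) ≫ (α_ M.X M.X M.X).hom ≫
      (M.X ◁ traceForm M D) ≫ (ρ_ M.X).hom) = κ ≫ (M.X ◁ tr M D) ≫ (ρ_ M.X).hom := by
    rw [traceForm]
    simp only [MonoidalCategory.whiskerLeft_comp, Category.assoc]
    slice_lhs 1 3 => rw [← slide]
    slice_lhs 3 4 => rw [associator_naturality_right]
    slice_lhs 4 5 => rw [← MonoidalCategory.whiskerLeft_comp, MonObj.mul_one M.X]
    slice_lhs 2 4 => rw [show (ρ_ (M.X ⊗ M.X)).inv ≫ (α_ M.X M.X (𝟙_ C)).hom ≫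
      (M.X ◁ (ρ_ M.X).hom) = 𝟙 (M.X ⊗ M.X) by monoidal]
    simp only [Category.id_comp, Category.assoc]
  rw [← key, snake1 M D κ h1 h2 h3, Category.comp_id]

theorem kappa_tr_left (κ : 𝟙_ C ⟶ M.X ⊗ M.X) (h1 : kappa1 M κ) (h2 : kappa2 M κ)
    (h3 : kappa3 M κ) : κ ≫ (tr M D ▷ M.X) ≫ (λ_ M.X).hom = MonObj.one (X := M.X) := by
  conv_lhs => rw [h3]
  try simp only [Category.assoc]
  slice_lhs 2 3 => rw [← BraidedCategory.braiding_naturality_right]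
  slice_lhs 3 4 => rw [braiding_leftUnitor]
  try simp only [Category.assoc]
  exact kappa_tr_right M D κ h1 h2 h3

theorem claimC2 (κ : 𝟙_ C ⟶ M.X ⊗ M.X) (h1 : kappa1 M κ) (h2 : kappa2 M κ)
    (h3 : kappa3 M κ) :
    (λ_ M.X).inv ≫ (κ ▷ M.X) ≫ (α_ M.X M.X M.X).hom ≫ (M.X ◁ MonObj.mul (X := M.X)) ≫
      (tr M D ▷ M.X) ≫ (λ_ M.X).hom = 𝟙 M.X := by
  slice_lhs 4 5 => rw [whisker_exchange]
  slice_lhs 5 6 => rw [leftUnitor_naturality]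
  slice_lhs 3 4 => rw [← associator_naturality_left]
  slice_lhs 4 5 => rw [show (α_ (𝟙_ C) M.X M.X).hom ≫ (λ_ (M.X ⊗ M.X)).hom
    = (λ_ M.X).hom ▷ M.X by monoidal]
  slice_lhs 2 4 => rw [show (κ ▷ M.X) ≫ ((tr M D ▷ M.X) ▷ M.X) ≫ ((λ_ M.X).hom ▷ M.X)
    = (κ ≫ (tr M D ▷ M.X) ≫ (λ_ M.X).hom) ▷ M.X by
      simp only [comp_whiskerRight, Category.assoc]]
  rw [kappa_tr_left M D κ h1 h2 h3]
  try simp only [Category.assoc]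
  rw [MonObj.one_mul M.X]
  simp

theorem kappa_tStar (κ : 𝟙_ C ⟶ M.X ⊗ M.X) (h1 : kappa1 M κ) (h2 : kappa2 M κ)
    (h3 : kappa3 M κ) : κ ≫ (tStar M D ▷ M.X) = D.η := by
  have hH : (ρ_ M.X).inv ≫ (M.X ◁ κ) ≫ (α_ M.X M.X M.X).inv ≫ (MonObj.mul (X := M.X) ▷ M.X) ≫
      (tr M D ▷ M.X) ≫ (λ_ M.X).hom = 𝟙 M.X := by
    calc (ρ_ M.X).inv ≫ (M.X ◁ κ) ≫ (α_ M.X M.X M.X).inv ≫ (MonObj.mul (X := M.X) ▷ M.X) ≫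
        (tr M D ▷ M.X) ≫ (λ_ M.X).hom
        = ((ρ_ M.X).inv ≫ (M.X ◁ κ) ≫ (α_ M.X M.X M.X).inv ≫ (MonObj.mul (X := M.X) ▷ M.X)) ≫
          (tr M D ▷ M.X) ≫ (λ_ M.X).hom := by simp only [Category.assoc]
      _ = ((λ_ M.X).inv ≫ (κ ▷ M.X) ≫ (α_ M.X M.X M.X).hom ≫ (M.X ◁ MonObj.mul (X := M.X))) ≫
          (tr M D ▷ M.X) ≫ (λ_ M.X).hom := by rw [← h2]
      _ = 𝟙 M.X := by
          simpa only [Category.assoc] using claimC2 M D κ h1 h2 h3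
  calc κ ≫ (tStar M D ▷ M.X)
      = D.η ≫ (D.DA ◁ ((ρ_ M.X).inv ≫ (M.X ◁ κ) ≫ (α_ M.X M.X M.X).inv ≫
          (MonObj.mul (X := M.X) ▷ M.X) ≫ (tr M D ▷ M.X) ≫ (λ_ M.X).hom)) := by
        rw [tStar, traceForm]
        simp only [comp_whiskerRight, MonoidalCategory.whiskerLeft_comp, Category.assoc]
        rw [show ((λ_ M.X).inv ▷ M.X)
          = (λ_ (M.X ⊗ M.X)).inv ≫ (α_ (𝟙_ C) M.X M.X).inv by monoidal]
        slice_lhs 3 4 => rw [← associator_inv_naturality_left]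
        slice_lhs 1 3 => rw [← slide]
        monoidal
    _ = D.η := by rw [hH]; simp

theorem recover (g : D.DA ⟶ D.DA) :
    (λ_ D.DA).inv ≫ ((D.η ≫ (g ▷ M.X)) ▷ D.DA) ≫ (α_ D.DA M.X D.DA).hom ≫
      (D.DA ◁ D.ε) ≫ (ρ_ D.DA).hom = g := by
  rw [comp_whiskerRight]
  slice_lhs 3 4 => rw [associator_naturality_left]
  slice_lhs 4 5 => rw [← whisker_exchange]
  slice_lhs 5 6 => rw [rightUnitor_naturality]
  slice_lhs 1 5 => rw [D.triangle₂]
  simp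

theorem tinv_tStar (κ : 𝟙_ C ⟶ M.X ⊗ M.X) (h1 : kappa1 M κ) (h2 : kappa2 M κ)
    (h3 : kappa3 M κ) : tinv M D κ ≫ tStar M D = 𝟙 D.DA := by
  have e1 : D.η ≫ ((tinv M D κ ≫ tStar M D) ▷ M.X) = D.η := by
    rw [comp_whiskerRight]
    slice_lhs 1 2 => rw [eta_tinv]
    exact kappa_tStar M D κ h1 h2 h3
  calc tinv M D κ ≫ tStar M D
      = (λ_ D.DA).inv ≫ ((D.η ≫ ((tinv M D κ ≫ tStar M D) ▷ M.X)) ▷ D.DA) ≫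
        (α_ D.DA M.X D.DA).hom ≫ (D.DA ◁ D.ε) ≫ (ρ_ D.DA).hom :=
        (recover M D _).symm
    _ = (λ_ D.DA).inv ≫ (D.η ▷ D.DA) ≫ (α_ D.DA M.X D.DA).hom ≫ (D.DA ◁ D.ε) ≫
        (ρ_ D.DA).hom := by rw [e1]
    _ = 𝟙 D.DA := D.triangle₂

end Work

/-- A rigid strongly separable algebra has a unique symmetric
separability idempotent, given by η ≫ ((t*)⁻¹ ⊗ 1). -/
theorem unique_symSepIdem (M : Mon C) (D : DualityData M.X)
    (h : StronglySeparable M) :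
    ∃ tinv : D.DA ⟶ M.X,
      tStar M D ≫ tinv = 𝟙 M.X ∧ tinv ≫ tStar M D = 𝟙 D.DA ∧
      ∀ κ : 𝟙_ C ⟶ M.X ⊗ M.X, IsSymSepIdem M κ →
        κ = D.η ≫ (tinv ▷ M.X) := by
  have h' : ∃ κ : 𝟙_ C ⟶ M.X ⊗ M.X, kappa1 M κ ∧ kappa2 M κ ∧ kappa3 M κ := h
  obtain ⟨κ₀, h1₀, h2₀, h3₀⟩ := h'
  refine ⟨tinv M D κ₀, tStar_tinv M D κ₀ h1₀ h2₀ h3₀,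
    tinv_tStar M D κ₀ h1₀ h2₀ h3₀, ?_⟩
  intro κ hκ
  have hκ' : kappa1 M κ ∧ kappa2 M κ ∧ kappa3 M κ := hκ
  obtain ⟨h1, h2, h3⟩ := hκ'
  calc κ = κ ≫ ((tStar M D ≫ tinv M D κ₀) ▷ M.X) := by
        rw [tStar_tinv M D κ₀ h1₀ h2₀ h3₀]; simp
    _ = (κ ≫ (tStar M D ▷ M.X)) ≫ (tinv M D κ₀ ▷ M.X) := by
        simp [comp_whiskerRight]
    _ = D.η ≫ (tinv M D κ₀ ▷ M.X) := by rw [kappa_tStar M D κ h1 h2 h3]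


end Paper
end

section
/- If A is a rigid strongly separable algebra in a symmetric monoidal category with unique symmetric separability idempotent κ, then the comultiplication Δ : A → A ⊗ A defined as the common value in (κ2), namely Δ = (1 ⊗ μ) ∘ (κ ⊗ 1), is coassociative: (Δ ⊗ 1) ∘ Δ = (1 ⊗ Δ) ∘ Δ. -/
open CategoryTheory MonoidalCategory

universe v u

namespace Paper

variable {C : Type u} [Category.{v} C] [MonoidalCategory C] [SymmetricCategory C]

theorem sepComul_key {A : C} (f : A ⟶ A ⊗ A) (κ : 𝟙_ C ⟶ A ⊗ A) (m : A ⊗ A ⟶ A) :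
    (ρ_ A).inv ≫ (A ◁ κ) ≫ (α_ A A A).inv ≫
      ((((f ▷ A) ≫ (α_ A A A).hom ≫ (A ◁ m)) ▷ A)) ≫ (α_ A A A).hom =
    f ≫ (A ◁ ((ρ_ A).inv ≫ (A ◁ κ) ≫ (α_ A A A).inv ≫ (m ▷ A))) := by
  rw [comp_whiskerRight, comp_whiskerRight, Category.assoc, Category.assoc,
    ← associator_inv_naturality_left_assoc, whisker_exchange_assoc,
    ← rightUnitor_inv_naturality_assoc]
  congr 1
  monoidal

theorem sepComul_frobL (M : Mon C) (κ : 𝟙_ C ⟶ M.X ⊗ M.X) :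
    MonObj.mul (X := M.X) ≫ sepComul M κ =
      (sepComul M κ ▷ M.X) ≫ (α_ M.X M.X M.X).hom ≫ (M.X ◁ MonObj.mul (X := M.X)) := by
  unfold sepComul
  rw [leftUnitor_inv_naturality_assoc, whisker_exchange_assoc,
    associator_naturality_right_assoc, ← MonoidalCategory.whiskerLeft_comp]
  conv_rhs => rw [comp_whiskerRight, comp_whiskerRight, comp_whiskerRight,
    Category.assoc, Category.assoc, Category.assoc,
    associator_naturality_middle_assoc, ← MonoidalCategory.whiskerLeft_comp,
    MonObj.mul_assoc, MonoidalCategory.whiskerLeft_comp, MonoidalCategory.whiskerLeft_comp]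
  simp [whisker_exchange]

/-- For a rigid strongly separable algebra with symmetric
separability idempotent κ, the comultiplication Δ = (1 ⊗ μ) ∘ (κ ⊗ 1) is
coassociative. -/
theorem sepComul_coassoc (M : Mon C) (D : DualityData M.X)
    (κ : 𝟙_ C ⟶ M.X ⊗ M.X) (hκ : IsSymSepIdem M κ) :
    sepComul M κ ≫ (sepComul M κ ▷ M.X) ≫ (α_ M.X M.X M.X).hom =
      sepComul M κ ≫ (M.X ◁ sepComul M κ) := by
  obtain ⟨-, h2, -⟩ := hκ
  have hd : sepComul M κ =
      (ρ_ M.X).inv ≫ (M.X ◁ κ) ≫ (α_ M.X M.X M.X).inv ≫ (MonObj.mul (X := M.X) ▷ M.X) := h2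
  calc sepComul M κ ≫ (sepComul M κ ▷ M.X) ≫ (α_ M.X M.X M.X).hom
      = ((ρ_ M.X).inv ≫ (M.X ◁ κ) ≫ (α_ M.X M.X M.X).inv ≫ (MonObj.mul (X := M.X) ▷ M.X)) ≫
          (sepComul M κ ▷ M.X) ≫ (α_ M.X M.X M.X).hom := by rw [← hd]
    _ = (ρ_ M.X).inv ≫ (M.X ◁ κ) ≫ (α_ M.X M.X M.X).inv ≫
          ((MonObj.mul (X := M.X) ≫ sepComul M κ) ▷ M.X) ≫ (α_ M.X M.X M.X).hom := by simp
    _ = (ρ_ M.X).inv ≫ (M.X ◁ κ) ≫ (α_ M.X M.X M.X).inv ≫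
          ((((sepComul M κ ▷ M.X) ≫ (α_ M.X M.X M.X).hom ≫ (M.X ◁ MonObj.mul (X := M.X))) ▷ M.X)) ≫
          (α_ M.X M.X M.X).hom := by rw [sepComul_frobL]
    _ = sepComul M κ ≫ (M.X ◁ ((ρ_ M.X).inv ≫ (M.X ◁ κ) ≫ (α_ M.X M.X M.X).inv ≫
          (MonObj.mul (X := M.X) ▷ M.X))) := sepComul_key (sepComul M κ) κ (MonObj.mul (X := M.X))
    _ = sepComul M κ ≫ (M.X ◁ sepComul M κ) := by rw [← hd]

end Paper
end
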